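/- Let α be a peak composition of n, let Q ∈ SPCT(α), and let S ∈ SMPCT(α) with unmark(S) = Q. Then Peak↑(Q) ⊆ Des(S) △ (Des(S)+1), where Des(S)+1 = {i+1 : i ∈ Des(S)} and △ denotes symmetric difference. -/

import Mathlib

open scoped Classical

noncomputable section

namespace QSQ

/-- A box `(c, r)`: column `c`, row `r` (both 1-indexed, rows counted from the bottom). -/
abbrev Box : Type := ℕ × ℕ

/-- An entry of the marked alphabet: `(i, true)` represents `i′`, `(i, false)` represents `i`. -/
abbrev MEntry : Type := ℕ × Bool

/-- Code realising the marked-alphabet order `1′ < 1 < 2′ < 2 < ⋯`. -/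
def mcode (x : MEntry) : ℕ := 2 * x.1 - (if x.2 then 1 else 0)

/-- `α` is a composition of `n`: a list of positive integers summing to `n`. -/
def IsComposition (n : ℕ) (α : List ℕ) : Prop := (∀ a ∈ α, 0 < a) ∧ α.sum = n

/-- All parts are positive, and every part except possibly the last is `> 1`. -/
def PeakShape (α : List ℕ) : Prop :=
  (∀ a ∈ α, 0 < a) ∧ ∀ i, i + 1 < α.length → 1 < α.getD i 0

/-- `α` is a peak composition of `n`. -/
def IsPeakComposition (n : ℕ) (α : List ℕ) : Prop := IsComposition n α ∧ PeakShape α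

/-- Box `(c, r)` belongs to the diagram `D_α`. -/
def inDiagram (α : List ℕ) (b : Box) : Prop :=
  1 ≤ b.1 ∧ 1 ≤ b.2 ∧ b.2 ≤ α.length ∧ b.1 ≤ α.getD (b.2 - 1) 0

instance (α : List ℕ) (b : Box) : Decidable (inDiagram α b) := by
  unfold inDiagram; infer_instance

/-- The diagram `D_α` as a finite set of boxes. -/
def diagramFinset (α : List ℕ) : Finset Box :=
  ((Finset.Icc 1 (α.foldr max 0)) ×ˢ (Finset.Icc 1 α.length)).filter (fun b => inDiagram α b)

/-- `B` is the set of boxes of the diagram of some peak composition. -/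
def IsPeakDiagram (B : Set Box) : Prop :=
  ∃ γ : List ℕ, PeakShape γ ∧ B = {b | inDiagram γ b}

/-- `β` refines `α`: `α` is obtained by summing consecutive entries of `β`. -/
def Refines (β α : List ℕ) : Prop :=
  ∃ L : List (List ℕ), (∀ l ∈ L, l ≠ []) ∧ L.flatten = β ∧ L.map List.sum = α

/-- `set(γ) = {γ₁, γ₁+γ₂, …, γ₁+⋯+γ_{k-1}}`, the proper partial sums. -/
def setOfComp (γ : List ℕ) : Finset ℕ :=
  ((List.range (γ.length - 1)).map (fun i => (γ.take (i + 1)).sum)).toFinset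

/-- `comp_n(X)`: the composition of `n` whose set of proper partial sums is `X ⊆ [n-1]`. -/
def compOf (n : ℕ) (X : Finset ℕ) : List ℕ :=
  let l := (0 :: X.sort (· ≤ ·)) ++ [n]
  (List.range (l.length - 1)).map (fun i => l.getD (i + 1) 0 - l.getD i 0)

/-- `Peak(X) = {i ∈ X : i − 1 ∉ X and i ≠ 1}`. -/
def peakSet (X : Finset ℕ) : Finset ℕ := X.filter (fun i => (i - 1) ∉ X ∧ i ≠ 1)

/-! ### Marked peak composition tableaux -/

/-- `T` is a marked peak composition tableau of shape `α` (a peak composition of `n`).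
Fillings take the default value `(0, false)` outside the diagram. -/
structure IsMPCT (n : ℕ) (α : List ℕ) (T : Box → MEntry) : Prop where
  offDiag : ∀ b, ¬ inDiagram α b → T b = (0, false)
  pos : ∀ b, inDiagram α b → 1 ≤ (T b).1
  /-- (MPCT1) rows weakly increase, with no repeated marked entry in a row. -/
  row_weak : ∀ c c' r, c < c' → inDiagram α (c, r) → inDiagram α (c', r) →
      mcode (T (c, r)) ≤ mcode (T (c', r)) ∧ ((T (c, r)).2 = true → T (c, r) ≠ T (c', r))
  /-- (MPCT2) the first column strictly increases bottom to top. -/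
  col_strict : ∀ r r', r < r' → inDiagram α (1, r) → inDiagram α (1, r') →
      mcode (T (1, r)) < mcode (T (1, r'))
  /-- (MPCT3) the boxes with entries among `{1', 1, …, k', k}` form a peak-composition diagram. -/
  peak_filter : ∀ k ≤ n, IsPeakDiagram {b | inDiagram α b ∧ (T b).1 ≤ k}
  /-- (MPCT4) an unmarked `i` in box `(2,r)` forbids `i` and `i'` in box `(1,r+1)`. -/
  mpct4 : ∀ r, inDiagram α (2, r) → inDiagram α (1, r + 1) → (T (2, r)).2 = false →
      (T (1, r + 1)).1 ≠ (T (2, r)).1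

/-- The number of occurrences of `i` or `i'` in `T`. -/
def wtFun (α : List ℕ) (T : Box → MEntry) (i : ℕ) : ℕ :=
  ((diagramFinset α).filter (fun b => (T b).1 = i)).card

/-- The weight of `T` as a list `(wt(T)₁, …, wt(T)_m)`, `m` the largest value occurring. -/
def wtList (α : List ℕ) (T : Box → MEntry) : List ℕ :=
  (List.range ((diagramFinset α).sup (fun b => (T b).1))).map (fun i => wtFun α T (i + 1))

/-- `T ∈ MPCT(α)`: an MPCT whose weight has no zero entry to the left of a nonzero entry. -/
def InMPCT (n : ℕ) (α : List ℕ) (T : Box → MEntry) : Prop :=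
  IsMPCT n α T ∧ ∀ i j, 1 ≤ i → i < j → wtFun α T i = 0 → wtFun α T j = 0

/-- `T ∈ SMPCT(α)`: each number `1, …, n` appears exactly once (marked or unmarked). -/
def InSMPCT (n : ℕ) (α : List ℕ) (T : Box → MEntry) : Prop :=
  InMPCT n α T ∧ ∀ i, 1 ≤ i → i ≤ n → wtFun α T i = 1

/-! ### Standardisation -/

/-- Secondary key for the standardisation order: marked entries of a given value are taken
bottom to top; unmarked ones from the highest row downwards. -/
def stdk2 (α : List ℕ) (T : Box → MEntry) (b : Box) : ℕ :=
  if (T b).2 then b.2 else α.length + 1 - b.2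

/-- The strict total order on boxes in which standardisation assigns `1, 2, …, n`. -/
def keyLt (α : List ℕ) (T : Box → MEntry) (a b : Box) : Prop :=
  mcode (T a) < mcode (T b) ∨
    (mcode (T a) = mcode (T b) ∧ (stdk2 α T a < stdk2 α T b ∨
      (stdk2 α T a = stdk2 α T b ∧ a.1 < b.1)))

/-- The standardisation map: box `b` receives the rank of `b` in the standardisation order,
keeping its mark. -/
def stdize (α : List ℕ) (T : Box → MEntry) : Box → MEntry := fun b =>
  if inDiagram α b then
    (((diagramFinset α).filter (fun a => keyLt α T a b)).card + 1, (T b).2)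
  else (0, false)

/-- The descent set of `S ∈ SMPCT(α)`: `i` is a descent if `i` is unmarked and strictly below
`i+1`, or `i+1` is marked and weakly below `i`. -/
def DesM (n : ℕ) (α : List ℕ) (S : Box → MEntry) : Finset ℕ :=
  (Finset.Icc 1 (n - 1)).filter (fun i =>
    ∃ b ∈ diagramFinset α, ∃ b' ∈ diagramFinset α, (S b).1 = i ∧ (S b').1 = i + 1 ∧
      (((S b).2 = false ∧ b.2 < b'.2) ∨ ((S b').2 = true ∧ b'.2 ≤ b.2)))

/-- Remove all marks. -/
def unmark (S : Box → MEntry) : Box → ℕ := fun b => (S b).1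

/-! ### Standard (unmarked) tableaux -/

/-- `T` is a standard immaculate tableau of shape `α ⊨ n`: a bijective filling by `1, …, n`
with rows increasing left to right and the first column increasing bottom to top. -/
structure IsSIT (n : ℕ) (α : List ℕ) (T : Box → ℕ) : Prop where
  offDiag : ∀ b, ¬ inDiagram α b → T b = 0
  range : ∀ b, inDiagram α b → 1 ≤ T b ∧ T b ≤ n
  inj : ∀ b b', inDiagram α b → inDiagram α b' → T b = T b' → b = b'
  surj : ∀ i, 1 ≤ i → i ≤ n → ∃ b, inDiagram α b ∧ T b = i
  row_strict : ∀ c c' r, c < c' → inDiagram α (c, r) → inDiagram α (c', r) →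
      T (c, r) < T (c', r)
  col_strict : ∀ r r', r < r' → inDiagram α (1, r) → inDiagram α (1, r') →
      T (1, r) < T (1, r')

/-- (SPCT3)/(SPYCT3): for every `k ≤ n` the boxes with entries `≤ k` form the diagram of a
peak composition. -/
def SPCT3 (n : ℕ) (α : List ℕ) (T : Box → ℕ) : Prop :=
  ∀ k ≤ n, IsPeakDiagram {b | inDiagram α b ∧ T b ≤ k}

/-- Standard peak composition tableau. -/
def IsSPCT (n : ℕ) (α : List ℕ) (T : Box → ℕ) : Prop := IsSIT n α T ∧ SPCT3 n α T

/-- (SPYCT4): if `T(c,r) < T(c+1,r')` for some `r' < r` then box `(c+1,r)` exists and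
`T(c+1,r) < T(c+1,r')`. -/
def SPYCT4 (α : List ℕ) (T : Box → ℕ) : Prop :=
  ∀ c r r', r' < r → inDiagram α (c, r) → inDiagram α (c + 1, r') →
    T (c, r) < T (c + 1, r') → inDiagram α (c + 1, r) ∧ T (c + 1, r) < T (c + 1, r')

/-- Standard Young composition tableau. -/
def IsSYCT (n : ℕ) (α : List ℕ) (T : Box → ℕ) : Prop := IsSIT n α T ∧ SPYCT4 α T

/-- Standard peak Young composition tableau (of peak shape `α ⊨ n`). -/
def IsSPYCT (n : ℕ) (α : List ℕ) (T : Box → ℕ) : Prop :=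
  IsPeakComposition n α ∧ IsSIT n α T ∧ SPCT3 n α T ∧ SPYCT4 α T

/-- `Des↑(T) = {i : i+1 is strictly above i}`. -/
def DesUp (n : ℕ) (α : List ℕ) (T : Box → ℕ) : Finset ℕ :=
  (Finset.Icc 1 (n - 1)).filter (fun i =>
    ∃ b ∈ diagramFinset α, ∃ b' ∈ diagramFinset α, T b = i ∧ T b' = i + 1 ∧ b.2 < b'.2)

def PeakUp (n : ℕ) (α : List ℕ) (T : Box → ℕ) : Finset ℕ := peakSet (DesUp n α T)

/-- `Des←(T) = {i : i+1 is weakly left of i}`. -/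
def DesLeft (n : ℕ) (α : List ℕ) (T : Box → ℕ) : Finset ℕ :=
  (Finset.Icc 1 (n - 1)).filter (fun i =>
    ∃ b ∈ diagramFinset α, ∃ b' ∈ diagramFinset α, T b = i ∧ T b' = i + 1 ∧ b'.1 ≤ b.1)

def PeakLeft (n : ℕ) (α : List ℕ) (T : Box → ℕ) : Finset ℕ := peakSet (DesLeft n α T)

/-! ### Dual immaculate recording tableaux -/

/-- `i+1` lies strictly right of `i` in `Q` (so `i+1` continues the row strip of `i`). -/
def ContR (β : List ℕ) (Q : Box → ℕ) (i : ℕ) : Prop :=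
  ∃ b ∈ diagramFinset β, ∃ b' ∈ diagramFinset β, Q b = i ∧ Q b' = i + 1 ∧ b.1 < b'.1

/-- `Q` is a dual immaculate recording tableau of shape `β ⊨ n`. -/
structure IsDIRT (n : ℕ) (β : List ℕ) (Q : Box → ℕ) : Prop where
  offDiag : ∀ b, ¬ inDiagram β b → Q b = 0
  range : ∀ b, inDiagram β b → 1 ≤ Q b ∧ Q b ≤ n
  inj : ∀ b b', inDiagram β b → inDiagram β b' → Q b = Q b' → b = b'
  surj : ∀ i, 1 ≤ i → i ≤ n → ∃ b, inDiagram β b ∧ Q b = i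
  /-- (DIRT1) -/
  row_strict : ∀ c c' r, c < c' → inDiagram β (c, r) → inDiagram β (c', r) →
      Q (c, r) < Q (c', r)
  /-- (DIRT3) first-column entries increase from top to bottom. -/
  col_top_down : ∀ r r', r < r' → inDiagram β (1, r) → inDiagram β (1, r') →
      Q (1, r') < Q (1, r)
  /-- (DIRT2) row strips start in the first column. -/
  strips_start : ∀ i b, 1 ≤ i → i ≤ n → inDiagram β b → Q b = i →
      (i = 1 ∨ ¬ ContR β Q (i - 1)) → b.1 = 1
  /-- (DIRT4) -/
  dirt4 : ∀ c r r', r' < r → inDiagram β (c, r) → inDiagram β (c, r') →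
      Q (c, r') < Q (c, r) → inDiagram β (c + 1, r') ∧ Q (c + 1, r') < Q (c, r)

/-- `Q` has row strip shape `γ`: the breaks between row strips occur exactly at the proper
partial sums of `γ`. -/
def HasRowStripShape (n : ℕ) (β : List ℕ) (Q : Box → ℕ) (γ : List ℕ) : Prop :=
  IsComposition n γ ∧ ∀ i, 1 ≤ i → i + 1 ≤ n → (ContR β Q i ↔ i ∉ setOfComp γ)

/-! ### Quasisymmetric functions -/

/-- The monomial quasisymmetric function `M_α` in variables indexed by `ℕ`. -/
def Mqs (α : List ℕ) : MvPowerSeries ℕ ℚ := fun d =>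
  if ∃ f : Fin α.length → ℕ, StrictMono f ∧
      d = ∑ j : Fin α.length, Finsupp.single (f j) (α.get j) then 1 else 0

/-- The fundamental quasisymmetric function `F_α = Σ_{β refines α} M_β`. -/
def Fqs (α : List ℕ) : MvPowerSeries ℕ ℚ :=
  ∑ᶠ β ∈ {β : List ℕ | Refines β α}, Mqs β

/-- The peak function `K_α` for a peak composition `α ⊨ n`. -/
def Kfn (n : ℕ) (α : List ℕ) : MvPowerSeries ℕ ℚ :=
  (MvPowerSeries.C : ℚ →+* MvPowerSeries ℕ ℚ) ((2 : ℚ) ^ ((peakSet (setOfComp α)).card + 1)) *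
    ∑ᶠ β ∈ {β : List ℕ | IsComposition n β ∧
      peakSet (setOfComp α) ⊆ symmDiff (setOfComp β) ((setOfComp β).image (· + 1))}, Fqs β

/-- The quasisymmetric Schur Q-function `Q̃_α = Σ_{T ∈ MPCT(α)} M_{wt(T)}`. -/
def Qtilde (n : ℕ) (α : List ℕ) : MvPowerSeries ℕ ℚ :=
  ∑ᶠ T ∈ {T : Box → MEntry | InMPCT n α T}, Mqs (wtList α T)

/-- The peak Young quasisymmetric Schur function
`S̃_α = Σ_{T ∈ SPYCT(α)} K_{comp_n(Peak←(T))}`. -/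
def Stilde (n : ℕ) (α : List ℕ) : MvPowerSeries ℕ ℚ :=
  ∑ᶠ T ∈ {T : Box → ℕ | IsSPYCT n α T}, Kfn n (compOf n (PeakLeft n α T))

/-! ### The insertion algorithm of Allen–Hallam–Mason -/

/-- A tableau given concretely as its list of rows, from bottom to top. -/
def shapeOf (rows : List (List ℕ)) : List ℕ := rows.map List.length

/-- The filling `Box → ℕ` determined by a list of rows (bottom to top). -/
def toFilling (rows : List (List ℕ)) : Box → ℕ := fun b =>
  if 1 ≤ b.1 ∧ 1 ≤ b.2 then (rows.getD (b.2 - 1) []).getD (b.1 - 1) 0 else 0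

/-- The augmented-diagram scan order: columns right to left, each column top to bottom.
(Positions not present in a given row are simply skipped by the insertion step.) -/
def scanList (rows : List (List ℕ)) : List (ℕ × ℕ) :=
  let C := (rows.map List.length).foldr max 0 + 1
  ((List.range C).reverse.map (fun ci =>
    (List.range rows.length).reverse.map (fun ri => (ci + 1, ri + 1)))).flatten

/-- One insertion of `k` (Procedure 3.1 of Allen–Hallam–Mason): walk the scan list looking for
the first box `(c,r)` with `T̄(c-1,r) ≤ k < T̄(c,r)`; place at an augmented box, bump at an
interior box and continue with the bumped entry, or create a new row (in the highest position
in the first column with all first-column entries below smaller than `k`) if the scan ends.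
Returns the new rows and the position of the newly created box. -/
def insertScan : List (ℕ × ℕ) → ℕ → List (List ℕ) → List (List ℕ) × ℕ × ℕ
  | [], k, rows =>
      let j := (rows.takeWhile (fun row => row.headD 0 < k)).length
      (rows.take j ++ [[k]] ++ rows.drop j, (1, j + 1))
  | (c, r) :: rest, k, rows =>
      let row := rows.getD (r - 1) []
      if 2 ≤ c ∧ c ≤ row.length + 1 ∧ row.getD (c - 2) 0 ≤ k then
        if c = row.length + 1 then
          (rows.set (r - 1) (row ++ [k]), (c, r))
        else if k < row.getD (c - 1) 0 then
          insertScan rest (row.getD (c - 1) 0) (rows.set (r - 1) (row.set (c - 1) k))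
        else insertScan rest k rows
      else insertScan rest k rows

/-- The reading word of a filling of shape `α`: rows read top to bottom, left to right. -/
def readingWord (α : List ℕ) (T : Box → ℕ) : List ℕ :=
  ((List.range α.length).reverse.map (fun ri =>
    (List.range (α.getD ri 0)).map (fun ci => T (ci + 1, ri + 1)))).flatten

/-- Reading insertion: insert the letters of `w` successively into the (initially empty)
insertion tableau `P`, recording in `Q` the label of each newly created box. -/
def readingInsertPQ (w : List ℕ) : List (List ℕ) × List (List ℕ) :=
  w.foldl (fun PQ k =>
    let res := insertScan (scanList PQ.1) k PQ.1
    let c := res.2.1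
    let r := res.2.2
    let j := (PQ.2.map List.length).sum + 1
    if c = 1 then
      (res.1, PQ.2.take (r - 1) ++ [[j]] ++ PQ.2.drop (r - 1))
    else
      (res.1, PQ.2.set (r - 1) ((PQ.2.getD (r - 1) []) ++ [j]))) ([], [])

/-! ### Procedure 5.2: generating DIRTs -/

/-- `PlaceSeq rows v lc cnt out`: starting from `rows`, place the `cnt` entries
`v, v+1, …, v+cnt-1` one at a time, each at the end of some row strictly to the right of the
previously placed entry (whose column was `lc`), never placing at the end of a row of length
`j` when some lower row has length `j + 1`; `out` is the result. -/
inductive PlaceSeq : List (List ℕ) → ℕ → ℕ → ℕ → List (List ℕ) → Prop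
  | refl (rows : List (List ℕ)) (v lc : ℕ) : PlaceSeq rows v lc 0 rows
  | step (rows : List (List ℕ)) (v lc cnt : ℕ) (r : ℕ) (out : List (List ℕ))
      (hr : r < rows.length)
      (hright : lc < (rows.getD r []).length + 1)
      (hrule3 : ∀ r' < r, (rows.getD r' []).length ≠ (rows.getD r []).length + 1)
      (next : PlaceSeq (rows.set r ((rows.getD r []) ++ [v])) (v + 1)
        ((rows.getD r []).length + 1) cnt out) :
      PlaceSeq rows v lc (cnt + 1) out


/-! Write `b₀, b₁, b₂` for the boxes of `i - 1, i, i + 1`. That `i` is a peak of `Des↑(Q)` says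
`b₁` is strictly below `b₂` and weakly below `b₀`. Since `S` has the same positions as `Q`, the
mark of `i` alone decides: unmarked, `i` is a descent of `S` and `i - 1` is not; marked, `i - 1`
is a descent of `S` and `i` is not. -/

lemma getD_le_foldr_max (l : List ℕ) (i : ℕ) : l.getD i 0 ≤ l.foldr max 0 := by
  induction l generalizing i with
  | nil => simp
  | cons a t ih =>
    cases i with
    | zero => simp
    | succ j => simpa using le_max_of_le_right (ih j)

lemma mem_diagramFinset_iff {α : List ℕ} {b : Box} : b ∈ diagramFinset α ↔ inDiagram α b := by
  refine ⟨fun h => (Finset.mem_filter.mp h).2, fun h => ?_⟩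
  obtain ⟨h1, h2, h3, h4⟩ := h
  exact Finset.mem_filter.mpr ⟨Finset.mem_product.mpr
    ⟨Finset.mem_Icc.mpr ⟨h1, h4.trans (getD_le_foldr_max _ _)⟩, Finset.mem_Icc.mpr ⟨h2, h3⟩⟩,
    h1, h2, h3, h4⟩

namespace IsSIT

variable {n : ℕ} {α : List ℕ} {T : Box → ℕ}

lemma exists_boxes_iff (hT : IsSIT n α T) {b b' : Box} (hb : inDiagram α b)
    (hb' : inDiagram α b') {i j : ℕ} (hTb : T b = i) (hTb' : T b' = j) (P : Box → Box → Prop) :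
    (∃ c ∈ diagramFinset α, ∃ c' ∈ diagramFinset α, T c = i ∧ T c' = j ∧ P c c') ↔ P b b' := by
  refine ⟨?_, fun h => ⟨b, mem_diagramFinset_iff.mpr hb, b', mem_diagramFinset_iff.mpr hb',
    hTb, hTb', h⟩⟩
  rintro ⟨c, hc, c', hc', hTc, hTc', h⟩
  rw [mem_diagramFinset_iff] at hc hc'
  rwa [hT.inj c b hc hb (hTc.trans hTb.symm), hT.inj c' b' hc' hb' (hTc'.trans hTb'.symm)] at h

lemma mem_Icc_of_consecutive (hT : IsSIT n α T) {b b' : Box} (hb : inDiagram α b)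
    (hb' : inDiagram α b') {i : ℕ} (hTb : T b = i) (hTb' : T b' = i + 1) :
    i ∈ Finset.Icc 1 (n - 1) := by
  have := hT.range b hb
  have := hT.range b' hb'
  exact Finset.mem_Icc.mpr ⟨by omega, by omega⟩

lemma mem_desUp_iff (hT : IsSIT n α T) {b b' : Box} (hb : inDiagram α b)
    (hb' : inDiagram α b') {i : ℕ} (hTb : T b = i) (hTb' : T b' = i + 1) :
    i ∈ DesUp n α T ↔ b.2 < b'.2 := by
  rw [DesUp, Finset.mem_filter, hT.exists_boxes_iff hb hb' hTb hTb' (fun c c' => c.2 < c'.2),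
    and_iff_right (hT.mem_Icc_of_consecutive hb hb' hTb hTb')]

lemma mem_desM_iff {S : Box → MEntry} (hS : IsSIT n α (unmark S)) {b b' : Box}
    (hb : inDiagram α b) (hb' : inDiagram α b') {i : ℕ} (hSb : (S b).1 = i)
    (hSb' : (S b').1 = i + 1) :
    i ∈ DesM n α S ↔
      ((S b).2 = false ∧ b.2 < b'.2) ∨ ((S b').2 = true ∧ b'.2 ≤ b.2) := by
  rw [DesM, Finset.mem_filter, and_iff_right (hS.mem_Icc_of_consecutive hb hb' hSb hSb')]
  exact hS.exists_boxes_iff hb hb' hSb hSb'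
    (fun c c' => ((S c).2 = false ∧ c.2 < c'.2) ∨ ((S c').2 = true ∧ c'.2 ≤ c.2))

end IsSIT

theorem stmt5_general (n : ℕ) (α : List ℕ)
    (Q : Box → ℕ) (hQ : IsSPCT n α Q)
    (S : Box → MEntry) (hu : unmark S = Q) :
    PeakUp n α Q ⊆ symmDiff (DesM n α S) ((DesM n α S).image (· + 1)) := by
  subst hu
  obtain ⟨hT, -⟩ := hQ
  intro i hi
  obtain ⟨hdes, hprev, hi1⟩ := Finset.mem_filter.mp hi
  have hrange := Finset.mem_Icc.mp (Finset.mem_filter.mp hdes).1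
  obtain ⟨j, rfl⟩ : ∃ j, i = j + 1 := ⟨i - 1, by omega⟩
  obtain ⟨b₀, hb₀, hSb₀⟩ := hT.surj j (by omega) (by omega)
  obtain ⟨b₁, hb₁, hSb₁⟩ := hT.surj (j + 1) (by omega) (by omega)
  obtain ⟨b₂, hb₂, hSb₂⟩ := hT.surj (j + 2) (by omega) (by omega)
  rw [hT.mem_desUp_iff hb₁ hb₂ hSb₁ hSb₂] at hdes
  rw [Nat.add_sub_cancel, hT.mem_desUp_iff hb₀ hb₁ hSb₀ hSb₁] at hprev
  rw [Finset.mem_symmDiff, (add_left_injective 1).mem_finset_image,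
    hT.mem_desM_iff hb₁ hb₂ hSb₁ hSb₂, hT.mem_desM_iff hb₀ hb₁ hSb₀ hSb₁]
  cases (S b₁).2 <;> simp <;> omega

theorem stmt5 (n : ℕ) (α : List ℕ) (hα : IsPeakComposition n α)
    (Q : Box → ℕ) (hQ : IsSPCT n α Q)
    (S : Box → MEntry) (hS : InSMPCT n α S) (hu : unmark S = Q) :
    PeakUp n α Q ⊆ symmDiff (DesM n α S) ((DesM n α S).image (· + 1)) :=
  stmt5_general n α Q hQ S hu

end QSQ
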